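/- Fix ε₀ > 0, c₀ = σ(ε₀/τ)·σ(−ε₀/τ) − 1 ∈ (−1,0), γ ∈ (0,1) and μ ∈ (0,1). For θ : X × Y → ℝ and x ∈ X, let Ω(θ,x) be the set of pairs (y₁,y₂) ∈ Y × Y such that both |log(p*(x,y₁,y₂)/(1 − p*(x,y₁,y₂)))| ≥ ε₀ and |log(π_θ(y₁|x)·π_ref(y₂|x)/(π_θ(y₂|x)·π_ref(y₁|x)))| ≥ ε₀ hold, where p*(x,y₁,y₂) = σ(r(x,y₁) − r(x,y₂)), and suppose |Ω(θ,x)|/K² = γ for all x ∈ X. Define the sampling distribution π₁(y₁,y₂|x) = μ/K² if (y₁,y₂) ∈ Ω(θ,x) and π₁(y₁,y₂|x) = (1 − μγ)/((1 − γ)·K²) otherwise, and the DPO loss with this sampling: L(θ) = −Σ_{x∈X} 𝒟(x) Σ_{y₁,y₂∈Y} π₁(y₁,y₂|x)·[p*(x,y₁,y₂)·log σ(h̄_θ(x,y₁,y₂)) + (1 − p*(x,y₁,y₂))·log σ(−h̄_θ(x,y₁,y₂))]. Then at such θ the second derivative satisfies |D²L(θ)(z,z)| ≤ (4·(μ·γ·c₀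 + 1)/τ²)·Σ_{x,y} z(x,y)² for every z : X × Y → ℝ. -/

import Mathlib

/-!
The loss is a sum of logistic losses `-(p log σ h + (1 - p) log σ (-h))` evaluated at margins
`h = h̄_θ(x, y₁, y₂)` that are affine in `θ`: the log-partition function of the softmax cancels, and
`h̄_θ = (θ(x, y₁) - θ(x, y₂)) / τ + const`. Hence `D²L(θ)(z, z)` is the sum of
`𝒟(x) π₁ σ(h) σ(-h) ((z(x, y₁) - z(x, y₂)) / τ)²`, where the last factor is at most
`(4 / τ²) Σ_y z(x, y)²`. The curvature `σ(h) σ(-h)` is at most `1 / 4`, and at most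
`σ(ε₀/τ) σ(-ε₀/τ) = c₀ + 1` on `Ω`, where `|h| ≥ ε₀ / τ`. Since `π₁` puts total mass `μγ` on `Ω`
and `1 - μγ` off it, the curvature averages to at most `μγ(c₀ + 1) + (1 - μγ) / 4 ≤ μγc₀ + 1`.
-/

open Real Finset

namespace Real

lemma hasDerivAt_log_sigmoid (t : ℝ) :
    HasDerivAt (fun t => log (sigmoid t)) (1 - sigmoid t) t := by
  convert (hasDerivAt_sigmoid t).log (sigmoid_pos t).ne' using 1
  field_simp [(sigmoid_pos t).ne']

lemma sigmoid_mul_one_sub_nonneg (t : ℝ) : 0 ≤ sigmoid t * (1 - sigmoid t) :=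
  mul_nonneg (sigmoid_nonneg t) (sub_nonneg.2 (sigmoid_le_one t))

lemma sigmoid_mul_one_sub_le_quarter (t : ℝ) : sigmoid t * (1 - sigmoid t) ≤ 1 / 4 := by
  nlinarith [sq_nonneg (sigmoid t - 1 / 2)]

lemma sigmoid_mul_one_sub_neg (t : ℝ) :
    sigmoid (-t) * (1 - sigmoid (-t)) = sigmoid t * (1 - sigmoid t) := by
  rw [sigmoid_neg]; ring

lemma sigmoid_mul_one_sub_le_of_le_abs {a t : ℝ} (ha : 0 ≤ a) (h : a ≤ |t|) :
    sigmoid t * (1 - sigmoid t) ≤ sigmoid a * (1 - sigmoid a) := by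
  have h_abs : sigmoid |t| * (1 - sigmoid |t|) = sigmoid t * (1 - sigmoid t) := by
    rcases abs_cases t with ⟨ht, -⟩ | ⟨ht, -⟩ <;> simp only [ht, sigmoid_mul_one_sub_neg]
  have h_half : 1 / 2 ≤ sigmoid a := by
    simpa [sigmoid_zero, one_div] using sigmoid_le ha
  nlinarith [sigmoid_le h, sigmoid_le_one |t|, h_abs]

end Real

noncomputable def logisticLoss (p t : ℝ) : ℝ :=
  -(p * log (sigmoid t) + (1 - p) * log (sigmoid (-t)))

lemma hasDerivAt_logisticLoss (p t : ℝ) : HasDerivAt (logisticLoss p) (sigmoid t - p) t := by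
  have h_neg := (hasDerivAt_log_sigmoid (-t)).comp t (hasDerivAt_neg t)
  exact (((hasDerivAt_log_sigmoid t).const_mul p).add (h_neg.const_mul (1 - p))).neg.congr_deriv
    (by rw [sigmoid_neg]; ring)

theorem fderiv_fderiv_sum_comp_clm_apply {ι E : Type*} [Fintype ι] [NormedAddCommGroup E]
    [NormedSpace ℝ E] {g g' g'' : ι → ℝ → ℝ}
    (hg : ∀ i t, HasDerivAt (g i) (g' i t) t) (hg' : ∀ i t, HasDerivAt (g' i) (g'' i t) t)
    (ℓ : ι → E →L[ℝ] ℝ) (θ z : E) :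
    fderiv ℝ (fderiv ℝ fun w => ∑ i, g i (ℓ i w)) θ z z = ∑ i, g'' i (ℓ i θ) * ℓ i z ^ 2 := by
  have h_first : fderiv ℝ (fun w => ∑ i, g i (ℓ i w)) = fun v => ∑ i, g' i (ℓ i v) • ℓ i := by
    funext v
    exact (HasFDerivAt.fun_sum fun i _ => (hg i _).comp_hasFDerivAt v (ℓ i).hasFDerivAt).fderiv
  have h_second : HasFDerivAt (fun v => ∑ i, g' i (ℓ i v) • ℓ i)
      (∑ i, (g'' i (ℓ i θ) • ℓ i).smulRight (ℓ i)) θ :=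
    HasFDerivAt.fun_sum fun i _ =>
      ((hg' i _).comp_hasFDerivAt θ (ℓ i).hasFDerivAt).smul_const (ℓ i)
  rw [h_first, h_second.fderiv]
  simp [sq, mul_assoc]

theorem fderiv_fderiv_sum_logisticLoss_apply {ι E : Type*} [Fintype ι] [NormedAddCommGroup E]
    [NormedSpace ℝ E] (c p d : ι → ℝ) (ℓ : ι → E →L[ℝ] ℝ) (θ z : E) :
    fderiv ℝ (fderiv ℝ fun w => ∑ i, c i * logisticLoss (p i) (ℓ i w + d i)) θ z z =
      ∑ i, c i * (sigmoid (ℓ i θ + d i) * (1 - sigmoid (ℓ i θ + d i))) * ℓ i z ^ 2 :=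
  fderiv_fderiv_sum_comp_clm_apply
    (fun i t => ((hasDerivAt_logisticLoss (p i) (t + d i)).comp_add_const t (d i)).const_mul (c i))
    (fun i t =>
      (((hasDerivAt_sigmoid (t + d i)).sub_const (p i)).comp_add_const t (d i)).const_mul (c i))
    ℓ θ z

noncomputable def logitGap {X Y : Type*} (τ : ℝ) (x : X) (y₁ y₂ : Y) : (X × Y → ℝ) →L[ℝ] ℝ :=
  τ⁻¹ • (ContinuousLinearMap.proj (R := ℝ) (φ := fun _ : X × Y => ℝ) (x, y₁) -
    ContinuousLinearMap.proj (x, y₂))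

@[simp]
lemma logitGap_apply {X Y : Type*} (τ : ℝ) (x : X) (y₁ y₂ : Y) (w : X × Y → ℝ) :
    logitGap τ x y₁ y₂ w = (w (x, y₁) - w (x, y₂)) / τ := by
  simp [logitGap, div_eq_inv_mul]

theorem log_softmax_div_sub_log_softmax_div {ι : Type*} [Fintype ι] [Nonempty ι] (v q : ι → ℝ)
    (hq : ∀ i, 0 < q i) (i j : ι) :
    log (exp (v i) / (∑ k, exp (v k)) / q i) - log (exp (v j) / (∑ k, exp (v k)) / q j) =
      v i - v j + (log (q j) - log (q i)) := by
  have hZ : 0 < ∑ k, exp (v k) := by positivity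
  rw [log_div (by positivity) (hq i).ne', log_div (by positivity) (hq j).ne',
    log_div (exp_pos _).ne' hZ.ne', log_div (exp_pos _).ne' hZ.ne', log_exp, log_exp]
  ring

theorem log_mul_div_mul {a b c d : ℝ} (ha : 0 < a) (hb : 0 < b) (hc : 0 < c) (hd : 0 < d) :
    log (a * d / (b * c)) = log (a / c) - log (b / d) := by
  rw [← log_div (by positivity) (by positivity)]
  congr 1
  field_simp

theorem sq_sub_le_four_mul_sum_sq {ι : Type*} [Fintype ι] (f : ι → ℝ) (i j : ι) :
    (f i - f j) ^ 2 ≤ 4 * ∑ k, f k ^ 2 := by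
  have hi := single_le_sum (fun k _ => sq_nonneg (f k)) (mem_univ i)
  have hj := single_le_sum (fun k _ => sq_nonneg (f k)) (mem_univ j)
  nlinarith [sq_nonneg (f i + f j)]

theorem sum_mul_le_of_piecewise {α : Type*} [Fintype α] [DecidableEq α] (s : Finset α)
    {w f : α → ℝ} {a b A B : ℝ} (ha : 0 ≤ a) (hb : 0 ≤ b)
    (hw_mem : ∀ p ∈ s, w p = a) (hw_not_mem : ∀ p ∉ s, w p = b)
    (hf_mem : ∀ p ∈ s, f p ≤ A) (hf_not_mem : ∀ p ∉ s, f p ≤ B) :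
    ∑ p, w p * f p ≤ #s * (a * A) + #sᶜ * (b * B) := by
  rw [← sum_add_sum_compl s]
  gcongr
  · simpa using sum_le_card_nsmul s (fun p => w p * f p) (a * A) fun p hp => by
      rw [hw_mem p hp]; exact mul_le_mul_of_nonneg_left (hf_mem p hp) ha
  · simpa using sum_le_card_nsmul sᶜ (fun p => w p * f p) (b * B) fun p hp => by
      rw [mem_compl] at hp
      rw [hw_not_mem p hp]; exact mul_le_mul_of_nonneg_left (hf_not_mem p hp) hb

theorem sum_biased_mul_le {α : Type*} [Fintype α] [Nonempty α] (s : Finset α)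
    {w f : α → ℝ} {γ μ A B : ℝ} (hγ : γ < 1) (hμ : 0 ≤ μ) (hμγ : μ * γ ≤ 1)
    (hs : (#s : ℝ) / Fintype.card α = γ)
    (hw_mem : ∀ p ∈ s, w p = μ / Fintype.card α)
    (hw_not_mem : ∀ p ∉ s, w p = (1 - μ * γ) / ((1 - γ) * Fintype.card α))
    (hf_mem : ∀ p ∈ s, f p ≤ A) (hf_not_mem : ∀ p ∉ s, f p ≤ B) :
    ∑ p, w p * f p ≤ μ * γ * A + (1 - μ * γ) * B := by
  classical
  have hN : (0 : ℝ) < Fintype.card α := by exact_mod_cast Fintype.card_pos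
  have h_card : (#s : ℝ) = γ * Fintype.card α := by rw [← hs]; field_simp
  have h_card_compl : (#sᶜ : ℝ) = (1 - γ) * Fintype.card α := by
    rw [card_compl, Nat.cast_sub (card_le_univ s), h_card]; ring
  have hb : 0 ≤ (1 - μ * γ) / ((1 - γ) * Fintype.card α) :=
    div_nonneg (by linarith) (mul_nonneg (by linarith) hN.le)
  refine (sum_mul_le_of_piecewise s (by positivity) hb hw_mem hw_not_mem hf_mem
    hf_not_mem).trans_eq ?_
  rw [h_card, h_card_compl]
  field_simp [(by linarith : (1 : ℝ) - γ ≠ 0)]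

theorem abs_sum_mul_le_of_sum_eq_one {ι : Type*} [Fintype ι] {D B S : ι → ℝ} {C : ℝ}
    (hD0 : ∀ i, 0 ≤ D i) (hD1 : ∑ i, D i = 1) (hB0 : ∀ i, 0 ≤ B i) (hB : ∀ i, B i ≤ C * S i) :
    |∑ i, D i * B i| ≤ C * ∑ i, S i := by
  rw [abs_of_nonneg (sum_nonneg fun i _ => mul_nonneg (hD0 i) (hB0 i)), mul_sum]
  refine sum_le_sum fun i _ => ?_
  have hD_le : D i ≤ 1 := hD1 ▸ single_le_sum (fun k _ => hD0 k) (mem_univ i)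
  nlinarith [hB0 i, hB i, hD0 i]

theorem fderiv_fderiv_pairwise_logistic_apply {X Y : Type*} [Fintype X] [Fintype Y] (τ : ℝ)
    (c : X → ℝ) (π₁ p d : X → Y → Y → ℝ) (h : (X × Y → ℝ) → X → Y → Y → ℝ)
    (hh : ∀ w x y₁ y₂, h w x y₁ y₂ = logitGap τ x y₁ y₂ w + d x y₁ y₂) (θ z : X × Y → ℝ) :
    fderiv ℝ (fderiv ℝ fun w => -∑ x, c x * ∑ y₁, ∑ y₂, π₁ x y₁ y₂ *
        (p x y₁ y₂ * log (sigmoid (h w x y₁ y₂)) +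
          (1 - p x y₁ y₂) * log (sigmoid (-h w x y₁ y₂)))) θ z z =
      ∑ x, c x * ∑ y₁, ∑ y₂, π₁ x y₁ y₂ *
        (sigmoid (h θ x y₁ y₂) * (1 - sigmoid (h θ x y₁ y₂)) * logitGap τ x y₁ y₂ z ^ 2) := by
  have h_sum : (fun w => -∑ x, c x * ∑ y₁, ∑ y₂, π₁ x y₁ y₂ *
        (p x y₁ y₂ * log (sigmoid (h w x y₁ y₂)) +
          (1 - p x y₁ y₂) * log (sigmoid (-h w x y₁ y₂)))) =
      fun w => ∑ i : X × Y × Y, c i.1 * π₁ i.1 i.2.1 i.2.2 *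
        logisticLoss (p i.1 i.2.1 i.2.2) (logitGap τ i.1 i.2.1 i.2.2 w + d i.1 i.2.1 i.2.2) := by
    funext w
    simp only [hh, logisticLoss, Fintype.sum_prod_type, mul_sum, ← sum_neg_distrib]
    ring_nf
  rw [h_sum, fderiv_fderiv_sum_logisticLoss_apply]
  simp only [hh, Fintype.sum_prod_type, mul_sum]
  ring_nf

theorem abs_sum_biased_curvature_le {X Y : Type*} [Fintype X] [Fintype Y] [Nonempty Y]
    (τ : ℝ) {D : X → ℝ} (hD0 : ∀ x, 0 ≤ D x) (hD1 : ∑ x, D x = 1) (Ω : X → Finset (Y × Y))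
    {π₁ κ : X → Y → Y → ℝ} {γ μ κ₀ : ℝ} (hγ : γ < 1) (hμ : 0 ≤ μ) (hμγ : μ * γ ≤ 1)
    (hΩ : ∀ x, ((Ω x).card : ℝ) / (Fintype.card Y : ℝ) ^ 2 = γ)
    (hπ₁mem : ∀ x y₁ y₂, (y₁, y₂) ∈ Ω x → π₁ x y₁ y₂ = μ / (Fintype.card Y : ℝ) ^ 2)
    (hπ₁nmem : ∀ x y₁ y₂, (y₁, y₂) ∉ Ω x →
      π₁ x y₁ y₂ = (1 - μ * γ) / ((1 - γ) * (Fintype.card Y : ℝ) ^ 2))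
    (hκ0 : ∀ x y₁ y₂, 0 ≤ κ x y₁ y₂) (hκ : ∀ x y₁ y₂, κ x y₁ y₂ ≤ 1 / 4)
    (hκΩ : ∀ x, ∀ p ∈ Ω x, κ x p.1 p.2 ≤ κ₀) (z : X × Y → ℝ) :
    |∑ x, D x * ∑ y₁, ∑ y₂, π₁ x y₁ y₂ * (κ x y₁ y₂ * logitGap τ x y₁ y₂ z ^ 2)| ≤
      4 * (μ * γ * (κ₀ - 1) + 1) / τ ^ 2 * ∑ p, z p ^ 2 := by
  classical
  have hK : (0 : ℝ) < (Fintype.card Y : ℝ) ^ 2 := by positivity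
  have h_card : (Fintype.card (Y × Y) : ℝ) = (Fintype.card Y : ℝ) ^ 2 := by
    rw [Fintype.card_prod, Nat.cast_mul, sq]
  have hπ₁_nonneg : ∀ x y₁ y₂, 0 ≤ π₁ x y₁ y₂ := fun x y₁ y₂ => by
    by_cases h : (y₁, y₂) ∈ Ω x
    · rw [hπ₁mem x y₁ y₂ h]; positivity
    · rw [hπ₁nmem x y₁ y₂ h]
      exact div_nonneg (by linarith) (mul_nonneg (by linarith) hK.le)
  have h_inner : ∀ x, ∑ y₁, ∑ y₂, π₁ x y₁ y₂ * (κ x y₁ y₂ * logitGap τ x y₁ y₂ z ^ 2) ≤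
      4 * (μ * γ * (κ₀ - 1) + 1) / τ ^ 2 * ∑ y, z (x, y) ^ 2 := by
    intro x
    set M := 4 / τ ^ 2 * ∑ y, z (x, y) ^ 2 with hM_def
    have hM : 0 ≤ M := by positivity
    have h_sq : ∀ y₁ y₂, logitGap τ x y₁ y₂ z ^ 2 ≤ M := fun y₁ y₂ => by
      rw [logitGap_apply, div_pow, hM_def, div_mul_eq_mul_div]
      gcongr
      exact sq_sub_le_four_mul_sum_sq (fun y => z (x, y)) y₁ y₂
    rw [← Fintype.sum_prod_type']
    refine (sum_biased_mul_le (Ω x) (A := κ₀ * M) (B := 1 / 4 * M) hγ hμ hμγ (h_card ▸ hΩ x)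
      (fun p hp => ?_) (fun p hp => ?_) (fun p hp => ?_) (fun p hp => ?_)).trans ?_
    · rw [h_card]; exact hπ₁mem x p.1 p.2 hp
    · rw [h_card]; exact hπ₁nmem x p.1 p.2 hp
    · exact mul_le_mul (hκΩ x p hp) (h_sq _ _) (sq_nonneg _) ((hκ0 _ _ _).trans (hκΩ x p hp))
    · exact mul_le_mul (hκ x _ _) (h_sq _ _) (sq_nonneg _) (by norm_num)
    · rw [show 4 * (μ * γ * (κ₀ - 1) + 1) / τ ^ 2 * ∑ y, z (x, y) ^ 2 =
          (μ * γ * (κ₀ - 1) + 1) * M by rw [hM_def]; ring]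
      nlinarith [mul_nonneg hM (sub_nonneg.2 hμγ)]
  rw [Fintype.sum_prod_type]
  refine abs_sum_mul_le_of_sum_eq_one hD0 hD1 (fun x => ?_) h_inner
  exact sum_nonneg fun y₁ _ => sum_nonneg fun y₂ _ =>
    mul_nonneg (hπ₁_nonneg x y₁ y₂) (mul_nonneg (hκ0 x y₁ y₂) (sq_nonneg _))

theorem dpo_biased_sampling_smoothness_general
    {X Y : Type*} [Fintype X] [Fintype Y] [Nonempty Y]
    (τ : ℝ) (hτ : 0 < τ)
    (D : X → ℝ) (hD0 : ∀ x, 0 ≤ D x) (hD1 : ∑ x : X, D x = 1)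
    (πref : X → Y → ℝ)
    (hπref0 : ∀ x y, 0 < πref x y)
    (σ : ℝ → ℝ) (hσ : ∀ t, σ t = (1 + Real.exp (-t))⁻¹)
    (pstar : X → Y → Y → ℝ)
    (πθ : (X × Y → ℝ) → X → Y → ℝ)
    (hπθ : ∀ θ x y, πθ θ x y = Real.exp (θ (x, y)) / ∑ y' : Y, Real.exp (θ (x, y')))
    (hbar : (X × Y → ℝ) → X → Y → Y → ℝ)
    (hhbar : ∀ θ x y₁ y₂, hbar θ x y₁ y₂ =
      (1 / τ) * (Real.log (πθ θ x y₁ / πref x y₁) - Real.log (πθ θ x y₂ / πref x y₂)))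
    (ε₀ : ℝ) (hε₀ : 0 < ε₀)
    (c₀ : ℝ) (hc₀ : c₀ = σ (ε₀ / τ) * σ (-(ε₀ / τ)) - 1)
    (γ μ : ℝ) (hγ : 0 < γ ∧ γ < 1) (hμ : 0 < μ ∧ μ < 1)
    (θ : X × Y → ℝ)
    (Ω : X → Finset (Y × Y))
    (hΩ : ∀ x (p : Y × Y), p ∈ Ω x ↔
      ε₀ ≤ |Real.log (pstar x p.1 p.2 / (1 - pstar x p.1 p.2))| ∧
      ε₀ ≤ |Real.log (πθ θ x p.1 * πref x p.2 / (πθ θ x p.2 * πref x p.1))|)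
    (hγθ : ∀ x, ((Ω x).card : ℝ) / (Fintype.card Y : ℝ) ^ 2 = γ)
    (π₁ : X → Y → Y → ℝ)
    (hπ₁mem : ∀ x y₁ y₂, (y₁, y₂) ∈ Ω x →
      π₁ x y₁ y₂ = μ / (Fintype.card Y : ℝ) ^ 2)
    (hπ₁nmem : ∀ x y₁ y₂, (y₁, y₂) ∉ Ω x →
      π₁ x y₁ y₂ = (1 - μ * γ) / ((1 - γ) * (Fintype.card Y : ℝ) ^ 2))
    (L : (X × Y → ℝ) → ℝ)
    (hL : ∀ θ', L θ' = -∑ x : X, D x * ∑ y₁ : Y, ∑ y₂ : Y,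
      π₁ x y₁ y₂ *
        (pstar x y₁ y₂ * Real.log (σ (hbar θ' x y₁ y₂)) +
         (1 - pstar x y₁ y₂) * Real.log (σ (-(hbar θ' x y₁ y₂))))) :
    ∀ z : X × Y → ℝ,
      |fderiv ℝ (fderiv ℝ L) θ z z| ≤
        (4 * (μ * γ * c₀ + 1) / τ ^ 2) * ∑ p : X × Y, z p ^ 2 := by
  intro z
  obtain rfl : σ = sigmoid := funext hσ
  have h_gap : ∀ w x y₁ y₂, hbar w x y₁ y₂ =
      logitGap τ x y₁ y₂ w + (log (πref x y₂) - log (πref x y₁)) / τ := fun w x y₁ y₂ => by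
    rw [hhbar, hπθ, hπθ,
      log_softmax_div_sub_log_softmax_div (fun y => w (x, y)) (πref x) (hπref0 x), logitGap_apply]
    ring
  have h_curv_Ω : ∀ x, ∀ p ∈ Ω x,
      sigmoid (hbar θ x p.1 p.2) * (1 - sigmoid (hbar θ x p.1 p.2)) ≤ c₀ + 1 := by
    intro x p hp
    have hπθ_pos : ∀ y, 0 < πθ θ x y := fun y => by rw [hπθ]; positivity
    have h_margin := ((hΩ x p).1 hp).2
    rw [log_mul_div_mul (hπθ_pos _) (hπθ_pos _) (hπref0 _ _) (hπref0 _ _),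
      show _ - _ = τ * hbar θ x p.1 p.2 by rw [hhbar]; field_simp, abs_mul, abs_of_pos hτ,
      ← div_le_iff₀' hτ] at h_margin
    rw [hc₀, sigmoid_neg, sub_add_cancel]
    exact sigmoid_mul_one_sub_le_of_le_abs (by positivity) h_margin
  rw [funext hL, fderiv_fderiv_pairwise_logistic_apply τ D π₁ pstar _ hbar h_gap]
  have h_bound := abs_sum_biased_curvature_le τ hD0 hD1 Ω hγ.2 hμ.1.le (by nlinarith) hγθ hπ₁mem
    hπ₁nmem (fun _ _ _ => sigmoid_mul_one_sub_nonneg _)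
    (fun _ _ _ => sigmoid_mul_one_sub_le_quarter _) h_curv_Ω z
  rwa [add_sub_cancel_right] at h_bound

/-- With the margin-biased sampling distribution π₁ (putting mass μ/K²
on pairs in Ω(θ,x) and (1−μγ)/((1−γ)K²) elsewhere, where |Ω(θ,x)|/K² = γ for all x),
the second derivative of the corresponding DPO loss satisfies
|D²L(θ)(z,z)| ≤ (4·(μ·γ·c₀ + 1)/τ²)·Σ_{x,y} z(x,y)², where
c₀ = σ(ε₀/τ)·σ(−ε₀/τ) − 1. -/
theorem dpo_biased_sampling_smoothness
    {X Y : Type*} [Fintype X] [Fintype Y] [Nonempty X] [Nonempty Y]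
    (r : X → Y → ℝ) (τ : ℝ) (hτ : 0 < τ)
    (D : X → ℝ) (hD0 : ∀ x, 0 ≤ D x) (hD1 : ∑ x : X, D x = 1)
    (πref : X → Y → ℝ)
    (hπref0 : ∀ x y, 0 < πref x y) (hπref1 : ∀ x, ∑ y : Y, πref x y = 1)
    (σ : ℝ → ℝ) (hσ : ∀ t, σ t = (1 + Real.exp (-t))⁻¹)
    (pstar : X → Y → Y → ℝ)
    (hpstar : ∀ x y₁ y₂, pstar x y₁ y₂ = σ (r x y₁ - r x y₂))
    (πθ : (X × Y → ℝ) → X → Y → ℝ)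
    (hπθ : ∀ θ x y, πθ θ x y = Real.exp (θ (x, y)) / ∑ y' : Y, Real.exp (θ (x, y')))
    (hbar : (X × Y → ℝ) → X → Y → Y → ℝ)
    (hhbar : ∀ θ x y₁ y₂, hbar θ x y₁ y₂ =
      (1 / τ) * (Real.log (πθ θ x y₁ / πref x y₁) - Real.log (πθ θ x y₂ / πref x y₂)))
    (ε₀ : ℝ) (hε₀ : 0 < ε₀)
    (c₀ : ℝ) (hc₀ : c₀ = σ (ε₀ / τ) * σ (-(ε₀ / τ)) - 1)
    (hc₀mem : -1 < c₀ ∧ c₀ < 0)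
    (γ μ : ℝ) (hγ : 0 < γ ∧ γ < 1) (hμ : 0 < μ ∧ μ < 1)
    (θ : X × Y → ℝ)
    (Ω : X → Finset (Y × Y))
    (hΩ : ∀ x (p : Y × Y), p ∈ Ω x ↔
      ε₀ ≤ |Real.log (pstar x p.1 p.2 / (1 - pstar x p.1 p.2))| ∧
      ε₀ ≤ |Real.log (πθ θ x p.1 * πref x p.2 / (πθ θ x p.2 * πref x p.1))|)
    (hγθ : ∀ x, ((Ω x).card : ℝ) / (Fintype.card Y : ℝ) ^ 2 = γ)
    (π₁ : X → Y → Y → ℝ)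
    (hπ₁mem : ∀ x y₁ y₂, (y₁, y₂) ∈ Ω x →
      π₁ x y₁ y₂ = μ / (Fintype.card Y : ℝ) ^ 2)
    (hπ₁nmem : ∀ x y₁ y₂, (y₁, y₂) ∉ Ω x →
      π₁ x y₁ y₂ = (1 - μ * γ) / ((1 - γ) * (Fintype.card Y : ℝ) ^ 2))
    (L : (X × Y → ℝ) → ℝ)
    (hL : ∀ θ', L θ' = -∑ x : X, D x * ∑ y₁ : Y, ∑ y₂ : Y,
      π₁ x y₁ y₂ *
        (pstar x y₁ y₂ * Real.log (σ (hbar θ' x y₁ y₂)) +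
         (1 - pstar x y₁ y₂) * Real.log (σ (-(hbar θ' x y₁ y₂))))) :
    ∀ z : X × Y → ℝ,
      |fderiv ℝ (fderiv ℝ L) θ z z| ≤
        (4 * (μ * γ * c₀ + 1) / τ ^ 2) * ∑ p : X × Y, z p ^ 2 :=
  dpo_biased_sampling_smoothness_general τ hτ D hD0 hD1 πref hπref0 σ hσ pstar πθ hπθ hbar hhbar ε₀
    hε₀ c₀ hc₀ γ μ hγ hμ θ Ω hΩ hγθ π₁ hπ₁mem hπ₁nmem L hL
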